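/- Let X and Y be independent random variables on a probability space, each almost surely positive, with Lebesgue densities f_X and f_Y, and let Z = X/(X+Y) with density f_Z. Suppose there exist positive functions A, B on (0,∞) and constants q > 0, λ > 0, p ≥ 0 such that f_Y(s*x) = A(s) * B(x) * (p + q*s*x) * exp(-λ*s*x) for all s, x > 0. Then for almost every s > 0: (1/(A(s)*(s+1)^2)) * f_Z(1/(s+1)) = p * ∫_0^∞ x * B(x) * f_X(x) * exp(-λ*s*x) dx + q*s * ∫_0^∞ x^2 * B(x) * f_X(x) * exp(-λ*s*x) dx. -/

import Mathlib

open MeasureTheory ProbabilityTheory Real Set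
open scoped ENNReal

lemma my_lintegral_image {s : Set ℝ} {f f' : ℝ → ℝ}
    (hs : MeasurableSet s) (hf' : ∀ x ∈ s, HasDerivWithinAt f (f' x) s x)
    (hf : Set.InjOn f s) (g : ℝ → ℝ≥0∞) :
    ∫⁻ x in f '' s, g x = ∫⁻ x in s, ENNReal.ofReal |f' x| * g (f x) := by
  simpa only [ContinuousLinearMap.det_toSpanSingleton] using
    lintegral_image_eq_lintegral_abs_det_fderiv_mul volume hs
      (fun x hx => (hf' x hx).hasFDerivWithinAt) hf g

lemma my_scale (x : ℝ) (hx : 0 < x) (g : ℝ → ℝ≥0∞) (hg : Measurable g) :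
    ∫⁻ y, g y = ENNReal.ofReal x * ∫⁻ s, g (x * s) := by
  have h1 : ∫⁻ s, g (x * s) = ∫⁻ y, g y ∂(Measure.map (x * ·) volume) :=
    (lintegral_map hg (measurable_const_mul x)).symm
  rw [h1, Real.map_volume_mul_left hx.ne', lintegral_smul_measure, smul_eq_mul, ← mul_assoc,
    ← ENNReal.ofReal_mul hx.le, abs_of_pos (inv_pos.2 hx), mul_inv_cancel₀ hx.ne',
    ENNReal.ofReal_one, one_mul]

theorem theorem_two
    {Ω : Type*} [MeasurableSpace Ω] (P : Measure Ω) [IsProbabilityMeasure P]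
    (X Y : Ω → ℝ) (hXm : Measurable X) (hYm : Measurable Y)
    (hindep : IndepFun X Y P)
    (hXpos : ∀ᵐ ω ∂P, 0 < X ω) (hYpos : ∀ᵐ ω ∂P, 0 < Y ω)
    (fX fY fZ A B : ℝ → ℝ)
    (hfXm : Measurable fX) (hfYm : Measurable fY) (hfZm : Measurable fZ)
    (hfX0 : ∀ x, 0 ≤ fX x) (hfY0 : ∀ y, 0 ≤ fY y) (hfZ0 : ∀ z, 0 ≤ fZ z)
    (hX : P.map X = volume.withDensity (fun x => ENNReal.ofReal (fX x)))
    (hY : P.map Y = volume.withDensity (fun y => ENNReal.ofReal (fY y)))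
    (hZ : P.map (fun ω => X ω / (X ω + Y ω)) =
      (volume.restrict (Ioo 0 1)).withDensity (fun z => ENNReal.ofReal (fZ z)))
    (q lam p : ℝ) (hq : 0 < q) (hlam : 0 < lam) (hp : 0 ≤ p)
    (hA : ∀ s ∈ Ioi (0:ℝ), 0 < A s) (hB : ∀ x ∈ Ioi (0:ℝ), 0 < B x)
    (hdecomp : ∀ s ∈ Ioi (0:ℝ), ∀ x ∈ Ioi (0:ℝ),
      fY (s * x) = A s * B x * (p + q * s * x) * Real.exp (-(lam * s * x))) :
    ∀ᵐ s ∂(volume.restrict (Ioi (0:ℝ))),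
      (1 / (A s * (s + 1) ^ 2)) * fZ (1 / (s + 1)) =
        p * (∫ x in Ioi (0:ℝ), x * B x * fX x * Real.exp (-(lam * s * x))) +
        q * s * (∫ x in Ioi (0:ℝ), x ^ 2 * B x * fX x * Real.exp (-(lam * s * x))) := by
  set gX : ℝ → ℝ≥0∞ := fun x => ENNReal.ofReal (fX x) with hgXdef
  set gY : ℝ → ℝ≥0∞ := fun y => ENNReal.ofReal (fY y) with hgYdef
  set gZ : ℝ → ℝ≥0∞ := fun z => ENNReal.ofReal (fZ z) with hgZdef
  have hgXm : Measurable gX := hfXm.ennreal_ofReal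
  have hgYm : Measurable gY := hfYm.ennreal_ofReal
  have hgZm : Measurable gZ := hfZm.ennreal_ofReal
  set S : Ω → ℝ := fun ω => Y ω / X ω with hSdef
  have hSm : Measurable S := hYm.div hXm
  haveI : IsProbabilityMeasure (P.map X) := Measure.isProbabilityMeasure_map hXm.aemeasurable
  haveI : IsProbabilityMeasure (P.map Y) := Measure.isProbabilityMeasure_map hYm.aemeasurable
  haveI : IsProbabilityMeasure (P.map S) := Measure.isProbabilityMeasure_map hSm.aemeasurable
  have hprod : P.map (fun ω => (X ω, Y ω)) = (P.map X).prod (P.map Y) :=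
    (indepFun_iff_map_prod_eq_prod_map_map hXm.aemeasurable hYm.aemeasurable).mp hindep
  have hdivm : Measurable fun pr : ℝ × ℝ => pr.2 / pr.1 := measurable_snd.div measurable_fst
  have hmapS : P.map S = ((volume.withDensity gX).prod (volume.withDensity gY)).map
      (fun pr : ℝ × ℝ => pr.2 / pr.1) := by
    rw [← hX, ← hY, ← hprod, Measure.map_map hdivm (hXm.prodMk hYm)]; rfl
  -- fX vanishes a.e. on nonpositive reals
  have hgX0 : ∀ᵐ x ∂(volume.restrict (Iic (0:ℝ))), gX x = 0 := by
    have hXIic : (volume.withDensity gX) (Iic 0) = 0 := by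
      rw [← hX, Measure.map_apply hXm measurableSet_Iic]
      have hnm : ∀ᵐ ω ∂P, ω ∉ X ⁻¹' Iic 0 := hXpos.mono fun ω h => by
        simp only [mem_preimage, mem_Iic, not_le]; exact h
      exact measure_eq_zero_iff_ae_notMem.mpr hnm
    rw [withDensity_apply _ measurableSet_Iic] at hXIic
    exact (lintegral_eq_zero_iff hgXm).mp hXIic
  set Hf : ℝ → ℝ≥0∞ := fun s => ∫⁻ x in Ioi (0:ℝ), gX x * (ENNReal.ofReal x * gY (x * s))
    with hHfdef
  have hHfm : Measurable Hf :=
    Measurable.lintegral_prod_right (f := fun s x => gX x * (ENNReal.ofReal x * gY (x * s)))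
      (((hgXm.comp measurable_snd)).mul ((measurable_snd.ennreal_ofReal).mul
        (hgYm.comp (measurable_snd.mul measurable_fst))))
  -- Claim 1 : the law of S has density Hf
  have hclaim1 : P.map S = volume.withDensity Hf := by
    ext E hE
    rw [hmapS, Measure.map_apply hdivm hE, Measure.prod_apply (hdivm hE), withDensity_apply _ hE]
    set D : ℝ → Set ℝ := fun x => Prod.mk x ⁻¹' ((fun pr : ℝ × ℝ => pr.2 / pr.1) ⁻¹' E) with hD
    have hDmeas : ∀ x, MeasurableSet (D x) := fun x => (measurable_id.div_const x) hE
    set F : ℝ → ℝ≥0∞ := fun x => (volume.withDensity gY) (D x) with hFdef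
    have hFm : Measurable F := measurable_measure_prodMk_left (hdivm hE)
    rw [lintegral_withDensity_eq_lintegral_mul _ hgXm hFm]
    have hsplit : ∫⁻ x, (gX * F) x = ∫⁻ x in Ioi (0:ℝ), gX x * F x := by
      rw [← lintegral_add_compl (gX * F) measurableSet_Ioi (μ := volume), compl_Ioi]
      have h0 : ∫⁻ x in Iic (0:ℝ), (gX * F) x = 0 := by
        rw [lintegral_congr_ae (g := fun _ => 0) (hgX0.mono fun x hx => by
          simp [Pi.mul_apply, hx])]
        simp
      rw [h0, add_zero]; rfl
    rw [hsplit]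
    have hFx : ∀ x ∈ Ioi (0:ℝ), gX x * F x
        = ∫⁻ s in E, gX x * (ENNReal.ofReal x * gY (x * s)) := by
      intro x hx
      have hx0 : (0:ℝ) < x := hx
      have hind : ∀ s, (D x).indicator gY (x * s) = E.indicator (fun s => gY (x * s)) s := by
        intro s
        have hmem : x * s ∈ D x ↔ s ∈ E := by
          simp only [hD, mem_preimage]
          rw [show (x * s) / x = s from mul_div_cancel_left₀ s hx0.ne']
        by_cases hs : s ∈ E
        · rw [indicator_of_mem (hmem.mpr hs), indicator_of_mem hs]
        · rw [indicator_of_notMem (fun h => hs (hmem.mp h)), indicator_of_notMem hs]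
      have hFxv : F x = ENNReal.ofReal x * ∫⁻ s in E, gY (x * s) := by
        rw [hFdef]
        simp only
        rw [withDensity_apply _ (hDmeas x), ← lintegral_indicator (hDmeas x),
          my_scale x hx0 _ (hgYm.indicator (hDmeas x))]
        congr 1
        rw [← lintegral_indicator hE]
        exact lintegral_congr fun s => hind s
      rw [hFxv,
        lintegral_const_mul' (gX x) _ (by rw [hgXdef]; exact ENNReal.ofReal_ne_top),
        lintegral_const_mul' (ENNReal.ofReal x) _ ENNReal.ofReal_ne_top, ← mul_assoc]
    rw [setLIntegral_congr_fun measurableSet_Ioi hFx, hHfdef]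
    exact lintegral_lintegral_swap (((hgXm.comp measurable_fst).mul
      ((measurable_fst.ennreal_ofReal).mul
        (hgYm.comp (measurable_fst.mul measurable_snd)))).aemeasurable)
  -- Claim 2 : the law of S as image of the law of Z
  set Kf : ℝ → ℝ≥0∞ := fun s => (Ioi (0:ℝ)).indicator
      (fun s => ENNReal.ofReal (((s+1)^2)⁻¹) * gZ ((s+1)⁻¹)) s with hKfdef
  have hKfm : Measurable Kf := by
    refine Measurable.indicator ?_ measurableSet_Ioi
    exact (((measurable_id.add_const 1).pow_const 2).inv.ennreal_ofReal).mul
      (hgZm.comp ((measurable_id.add_const 1).inv))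
  have hφm : Measurable fun z : ℝ => z⁻¹ - 1 := measurable_inv.sub measurable_const
  have hZmeas : Measurable fun ω => X ω / (X ω + Y ω) := hXm.div (hXm.add hYm)
  have hmapS2 : P.map S = ((volume.restrict (Ioo 0 1)).withDensity gZ).map
      (fun z : ℝ => z⁻¹ - 1) := by
    have hae : S =ᵐ[P] (fun z : ℝ => z⁻¹ - 1) ∘ (fun ω => X ω / (X ω + Y ω)) := by
      filter_upwards [hXpos, hYpos] with ω hx hy
      have hxy : 0 < X ω + Y ω := by linarith
      show Y ω / X ω = (X ω / (X ω + Y ω))⁻¹ - 1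
      rw [inv_div]
      field_simp
      ring
    rw [Measure.map_congr hae, ← hZ, ← Measure.map_map hφm hZmeas]
  have hclaim2 : P.map S = volume.withDensity Kf := by
    ext E hE
    rw [hmapS2, Measure.map_apply hφm hE, withDensity_apply _ (hφm hE),
      Measure.restrict_restrict (hφm hE), withDensity_apply _ hE]
    have himg : (fun z : ℝ => z⁻¹ - 1) ⁻¹' E ∩ Ioo 0 1
        = (fun s : ℝ => (s+1)⁻¹) '' (E ∩ Ioi 0) := by
      ext z
      constructor
      · rintro ⟨hzE, hz0, hz1⟩
        refine ⟨z⁻¹ - 1, ⟨hzE, ?_⟩, ?_⟩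
        · have : 1 < z⁻¹ := (one_lt_inv₀ hz0).mpr hz1
          simpa using sub_pos.mpr this
        · show (z⁻¹ - 1 + 1)⁻¹ = z
          rw [sub_add_cancel, inv_inv]
      · rintro ⟨s, ⟨hsE, hs0⟩, rfl⟩
        have hs0' : (0:ℝ) < s := hs0
        have h1 : (0:ℝ) < s + 1 := by linarith
        refine ⟨?_, inv_pos.mpr h1, ?_⟩
        · simpa [mem_preimage, inv_inv] using hsE
        · rw [inv_lt_one₀ h1]; linarith
    have hder : ∀ s ∈ E ∩ Ioi 0, HasDerivWithinAt (fun s : ℝ => (s+1)⁻¹)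
        (-1 / (s+1)^2) (E ∩ Ioi 0) s := by
      intro s hs
      have h1 : s + 1 ≠ 0 := by have : (0:ℝ) < s := hs.2; positivity
      exact ((((hasDerivAt_id s).add_const 1).inv h1).hasDerivWithinAt).congr_deriv (by simp)
    rw [himg, my_lintegral_image (hE.inter measurableSet_Ioi) hder
      (fun a ha b hb h => by
        have := inv_inj.mp h
        linarith) gZ]
    rw [setLIntegral_congr_fun (f := fun s => ENNReal.ofReal |(-1 : ℝ) / (s+1)^2| * gZ ((s+1)⁻¹))
      (g := fun s => ENNReal.ofReal (((s+1)^2)⁻¹) * gZ ((s+1)⁻¹)) (hE.inter measurableSet_Ioi)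
      ((fun s hs => by
        have h1 : (0:ℝ) < s + 1 := by have : (0:ℝ) < s := hs.2; linarith
        show ENNReal.ofReal |(-1 : ℝ) / (s+1)^2| * gZ ((s+1)⁻¹)
          = ENNReal.ofReal (((s+1)^2)⁻¹) * gZ ((s+1)⁻¹)
        rw [abs_of_neg (div_neg_of_neg_of_pos (by norm_num) (by positivity) :
          (-1 : ℝ) / (s+1)^2 < 0)]
        rw [show -((-1 : ℝ) / (s+1)^2) = ((s+1)^2)⁻¹ by ring]))]
    rw [hKfdef, lintegral_indicator measurableSet_Ioi,
      Measure.restrict_restrict measurableSet_Ioi, inter_comm]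
  -- densities agree a.e.
  have hfin : ∫⁻ s, Hf s ∂volume ≠ ⊤ := by
    rw [← setLIntegral_univ, ← withDensity_apply _ MeasurableSet.univ, ← hclaim1]
    exact measure_ne_top _ _
  have haeHK : Hf =ᵐ[volume] Kf :=
    (withDensity_eq_iff hHfm.aemeasurable hKfm.aemeasurable hfin).mp
      (hclaim1.symm.trans hclaim2)
  have hlt : ∀ᵐ s ∂volume, Hf s < ⊤ := ae_lt_top hHfm hfin
  -- the measurable surrogate for B
  set B' : ℝ → ℝ := fun x => fY x / (A 1 * ((p + q * x) * Real.exp (-(lam * x)))) with hB'def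
  have hB'm : Measurable B' :=
    hfYm.div (measurable_const.mul ((measurable_const.add
      (measurable_const.mul measurable_id)).mul ((measurable_id.const_mul lam).neg.exp)))
  have hA1 : 0 < A 1 := hA 1 (by norm_num)
  have hBeq : ∀ x ∈ Ioi (0:ℝ), B x = B' x := by
    intro x hx
    have hx0 : (0:ℝ) < x := hx
    have hd := hdecomp 1 (by norm_num) x hx
    rw [one_mul] at hd
    have hpq : 0 < p + q * x := by nlinarith
    rw [hB'def]
    simp only
    rw [hd]
    have he : Real.exp (-(lam * x)) ≠ 0 := (Real.exp_pos _).ne'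
    field_simp
  filter_upwards [ae_restrict_mem measurableSet_Ioi, ae_restrict_of_ae haeHK,
    ae_restrict_of_ae hlt] with s hs hHK hHlt
  -- pointwise computation on Ioi 0
  have hs0 : (0:ℝ) < s := hs
  have hAs : 0 < A s := hA s hs
  set e : ℝ → ℝ := fun x => Real.exp (-(lam * s * x)) with hedef
  set t1 : ℝ → ℝ := fun x => x * B' x * fX x * e x with ht1def
  set t2 : ℝ → ℝ := fun x => x ^ 2 * B' x * fX x * e x with ht2def
  have hem : Measurable e := (measurable_id.const_mul (lam * s)).neg.exp
  have ht1m : Measurable t1 := ((measurable_id.mul hB'm).mul hfXm).mul hem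
  have ht2m : Measurable t2 := (((measurable_id.pow_const 2).mul hB'm).mul hfXm).mul hem
  have hB'nn : ∀ x ∈ Ioi (0:ℝ), 0 ≤ B' x := fun x hx => (hBeq x hx) ▸ (hB x hx).le
  have he0 : ∀ x, 0 ≤ e x := fun x => (Real.exp_pos _).le
  have ht1nn' : ∀ x ∈ Ioi (0:ℝ), 0 ≤ t1 x := fun x hx =>
    mul_nonneg (mul_nonneg (mul_nonneg (le_of_lt hx) (hB'nn x hx)) (hfX0 x)) (he0 x)
  have ht2nn' : ∀ x ∈ Ioi (0:ℝ), 0 ≤ t2 x := fun x hx =>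
    mul_nonneg (mul_nonneg (mul_nonneg (sq_nonneg x) (hB'nn x hx)) (hfX0 x)) (he0 x)
  set U : ℝ≥0∞ := ∫⁻ x in Ioi (0:ℝ), ENNReal.ofReal (t1 x) with hUdef
  set V : ℝ≥0∞ := ∫⁻ x in Ioi (0:ℝ), ENNReal.ofReal (t2 x) with hVdef
  have hHs : Hf s = ENNReal.ofReal (A s)
      * (ENNReal.ofReal p * U + ENNReal.ofReal (q*s) * V) := by
    have hpt : ∀ x ∈ Ioi (0:ℝ), gX x * (ENNReal.ofReal x * gY (x * s))
        = ENNReal.ofReal (A s) * (ENNReal.ofReal p * ENNReal.ofReal (t1 x)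
          + ENNReal.ofReal (q*s) * ENNReal.ofReal (t2 x)) := by
      intro x hx
      have hx0 : (0:ℝ) < x := hx
      have hfy : fY (x * s) = A s * B' x * (p + q * s * x) * e x := by
        rw [mul_comm x s, hdecomp s hs x hx, hBeq x hx]
      rw [hgXdef, hgYdef]
      simp only
      rw [hfy, ← ENNReal.ofReal_mul hx0.le, ← ENNReal.ofReal_mul (hfX0 x),
        ← ENNReal.ofReal_mul hp, ← ENNReal.ofReal_mul (by positivity : (0:ℝ) ≤ q*s),
        ← ENNReal.ofReal_add (mul_nonneg hp (ht1nn' x hx))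
          (mul_nonneg (by positivity) (ht2nn' x hx)),
        ← ENNReal.ofReal_mul hAs.le]
      congr 1
      rw [ht1def, ht2def]
      ring
    rw [hHfdef]
    simp only
    rw [setLIntegral_congr_fun measurableSet_Ioi hpt,
      lintegral_const_mul' _ _ ENNReal.ofReal_ne_top,
      lintegral_add_left (f := fun x => ENNReal.ofReal p * ENNReal.ofReal (t1 x))
        (measurable_const.mul ht1m.ennreal_ofReal),
      lintegral_const_mul' _ _ ENNReal.ofReal_ne_top,
      lintegral_const_mul' _ _ ENNReal.ofReal_ne_top]
  have hkey : ENNReal.ofReal (((s+1)^2)⁻¹) * gZ ((s+1)⁻¹)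
      = ENNReal.ofReal (A s) * (ENNReal.ofReal p * U + ENNReal.ofReal (q*s) * V) := by
    rw [← hHs, hHK, hKfdef]
    exact (indicator_of_mem hs
      (fun s => ENNReal.ofReal (((s+1)^2)⁻¹) * gZ ((s+1)⁻¹))).symm
  have hsumlt : ENNReal.ofReal p * U + ENNReal.ofReal (q*s) * V ≠ ⊤ := by
    intro htop
    rw [hHs, htop, ENNReal.mul_top (ENNReal.ofReal_pos.mpr hAs).ne'] at hHlt
    exact lt_irrefl _ hHlt
  have hVlt : V ≠ ⊤ := by
    intro htop
    apply hsumlt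
    rw [htop, ENNReal.mul_top (ENNReal.ofReal_pos.mpr (by positivity : (0:ℝ) < q*s)).ne']
    exact ENNReal.add_eq_top.mpr (Or.inr rfl)
  have ht2nn : ∀ᵐ x ∂(volume.restrict (Ioi (0:ℝ))), 0 ≤ t2 x :=
    (ae_restrict_mem measurableSet_Ioi).mono fun x hx => ht2nn' x hx
  have ht2int : IntegrableOn t2 (Ioi 0) volume :=
    ⟨ht2m.aestronglyMeasurable, (hasFiniteIntegral_iff_ofReal ht2nn).mpr
      (lt_top_iff_ne_top.mpr hVlt)⟩
  have hVval : ENNReal.ofReal (q*s) * V = ENNReal.ofReal (q * s * ∫ x in Ioi (0:ℝ), t2 x) := by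
    rw [hVdef, ← ofReal_integral_eq_lintegral_ofReal ht2int ht2nn,
      ← ENNReal.ofReal_mul (by positivity : (0:ℝ) ≤ q*s)]
  have hUval : ENNReal.ofReal p * U = ENNReal.ofReal (p * ∫ x in Ioi (0:ℝ), t1 x) := by
    rcases hp.eq_or_lt with hp0 | hp0
    · rw [← hp0]
      simp
    · have hUlt : U ≠ ⊤ := by
        intro htop
        apply hsumlt
        rw [htop, ENNReal.mul_top (ENNReal.ofReal_pos.mpr hp0).ne']
        exact ENNReal.add_eq_top.mpr (Or.inl rfl)
      have ht1nn : ∀ᵐ x ∂(volume.restrict (Ioi (0:ℝ))), 0 ≤ t1 x :=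
        (ae_restrict_mem measurableSet_Ioi).mono fun x hx => ht1nn' x hx
      have ht1int : IntegrableOn t1 (Ioi 0) volume :=
        ⟨ht1m.aestronglyMeasurable, (hasFiniteIntegral_iff_ofReal ht1nn).mpr
          (lt_top_iff_ne_top.mpr hUlt)⟩
      rw [hUdef, ← ofReal_integral_eq_lintegral_ofReal ht1int ht1nn,
        ← ENNReal.ofReal_mul hp]
  set I1 : ℝ := ∫ x in Ioi (0:ℝ), t1 x with hI1def
  set I2 : ℝ := ∫ x in Ioi (0:ℝ), t2 x with hI2def
  have hI1nn : 0 ≤ I1 := setIntegral_nonneg measurableSet_Ioi ht1nn'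
  have hI2nn : 0 ≤ I2 := setIntegral_nonneg measurableSet_Ioi ht2nn'
  rw [hUval, hVval, ← ENNReal.ofReal_add (mul_nonneg hp hI1nn)
      (mul_nonneg (by positivity) hI2nn),
    ← ENNReal.ofReal_mul hAs.le, hgZdef] at hkey
  simp only at hkey
  rw [← ENNReal.ofReal_mul (by positivity : (0:ℝ) ≤ ((s+1)^2)⁻¹)] at hkey
  have hreal : ((s+1)^2)⁻¹ * fZ ((s+1)⁻¹) = A s * (p * I1 + q * s * I2) :=
    (ENNReal.ofReal_eq_ofReal_iff
      (mul_nonneg (by positivity) (hfZ0 _))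
      (mul_nonneg hAs.le (add_nonneg (mul_nonneg hp hI1nn)
        (mul_nonneg (by positivity) hI2nn)))).mp hkey
  have hJ1 : ∫ x in Ioi (0:ℝ), x * B x * fX x * e x = I1 :=
    setIntegral_congr_fun measurableSet_Ioi (fun x hx => by
      simp only [ht1def]; rw [hBeq x hx])
  have hJ2 : ∫ x in Ioi (0:ℝ), x ^ 2 * B x * fX x * e x = I2 :=
    setIntegral_congr_fun measurableSet_Ioi (fun x hx => by
      simp only [ht2def]; rw [hBeq x hx])
  rw [hJ1, hJ2, show (1:ℝ)/(s+1) = (s+1)⁻¹ from one_div _]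
  have h1 : (0:ℝ) < s + 1 := by linarith
  have hAne : A s ≠ 0 := hAs.ne'
  have h1ne : (s+1:ℝ) ≠ 0 := h1.ne'
  field_simp
  rw [eq_comm]
  field_simp at hreal
  linarith [hreal]
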